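/- Let C be a hyperbolically bounded subset of H²×H² and let μ > 0. Then there are finitely many elements (c₁,d₁),…,(c_k,d_k) of R×R such that V_{C,μ} = {(u·cᵢ, u·dᵢ) : 1 ≤ i ≤ k, u a unit of R}. -/

import Mathlib

/-!
Units of `R` have norm `±1`, so `V_{C,μ}` is stable under multiplication by units, and it
suffices to cover it by finitely many unit orbits. Since `y₁, y₂ > ε` on `C`, the inequality
`‖cZ+d‖ ≤ μ` bounds `|N(c)|`, and `|N(d)|` when `c = 0`. Nonzero elements of bounded norm lie in
finitely many classes up to units: two elements of the same norm `n` that are congruent modulo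
`n` are associates. Finally, for a fixed `c ≠ 0` the inequality confines both embeddings of `d`
to a bounded box, which contains only finitely many points of the lattice `R`.
-/

noncomputable section

open scoped Classical
open MeasureTheory

namespace Hilbert

/-- `k₀ = 2` if `k ≡ 1 (mod 4)` and `k₀ = 1` otherwise. -/
def k0 (k : ℕ) : ℝ := if k % 4 = 1 then 2 else 1

/-- `ω = (1 + √k)/k₀`. -/
def omg (k : ℕ) : ℝ := (1 + Real.sqrt k) / k0 k

/-- `ω' = (1 - √k)/k₀`, the algebraic conjugate of `ω`. -/
def omg' (k : ℕ) : ℝ := (1 - Real.sqrt k) / k0 k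

/-- The ring `R = ℤ[ω]`, realized inside `ℝ × ℝ` via the pair of real embeddings
`α ↦ (α, α')` of `K = ℚ(√k)`. -/
def R (k : ℕ) : Subring (ℝ × ℝ) := Subring.closure {(omg k, omg' k)}

/-- The ambient space `ℝ⁴`, with coordinates `(x₁, x₂, y₁, y₂)`. -/
abbrev Pt : Type := ℝ × ℝ × ℝ × ℝ

def x1 (p : Pt) : ℝ := p.1
def x2 (p : Pt) : ℝ := p.2.1
def y1 (p : Pt) : ℝ := p.2.2.1
def y2 (p : Pt) : ℝ := p.2.2.2

/-- `H² × H²`, identified with an open subset of `ℝ⁴`. -/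
def HH : Set Pt := {p | 0 < y1 p ∧ 0 < y2 p}

/-- The coordinate `s₁`, determined by `x₁ = s₁ + s₂ ω`, `x₂ = s₁ + s₂ ω'`. -/
def s1 (k : ℕ) (p : Pt) : ℝ := (omg' k * x1 p - omg k * x2 p) / (omg' k - omg k)

/-- The coordinate `s₂`. -/
def s2 (k : ℕ) (p : Pt) : ℝ := (x1 p - x2 p) / (omg k - omg' k)

/-- The ratio `r = y₁/y₂`. -/
def rr (p : Pt) : ℝ := y1 p / y2 p

/-- The height `h = y₁ y₂`. -/
def hh (p : Pt) : ℝ := y1 p * y2 p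

/-- `‖cZ+d‖ = ((cx₁+d)² + c²y₁²)((c'x₂+d')² + c'²y₂²)`, where `c = (c, c')`, `d = (d, d')`
are given by their two real embeddings. -/
def HNorm (c d : ℝ × ℝ) (p : Pt) : ℝ :=
  ((c.1 * x1 p + d.1) ^ 2 + c.1 ^ 2 * y1 p ^ 2) *
    ((c.2 * x2 p + d.2) ^ 2 + c.2 ^ 2 * y2 p ^ 2)

/-- `S = {(c,d) ∈ R² : cR + dR = R}`. -/
def Spairs (k : ℕ) : Set (R k × R k) := {cd | Ideal.span {cd.1, cd.2} = ⊤}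

/-- `V_{c,d}^≥ = {Z ∈ H²×H² : ‖cZ+d‖ ≥ 1}`. -/
def Vge (k : ℕ) (cd : R k × R k) : Set Pt :=
  {p ∈ HH | 1 ≤ HNorm (cd.1 : ℝ × ℝ) (cd.2 : ℝ × ℝ) p}

/-- `V_{c,d}^≤ = {Z ∈ H²×H² : ‖cZ+d‖ ≤ 1}`. -/
def Vle (k : ℕ) (cd : R k × R k) : Set Pt :=
  {p ∈ HH | HNorm (cd.1 : ℝ × ℝ) (cd.2 : ℝ × ℝ) p ≤ 1}

/-- `V_{c,d} = {Z ∈ H²×H² : ‖cZ+d‖ = 1}`. -/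
def Veq (k : ℕ) (cd : R k × R k) : Set Pt :=
  {p ∈ HH | HNorm (cd.1 : ℝ × ℝ) (cd.2 : ℝ × ℝ) p = 1}

/-- `F₀ = {Z ∈ H²×H² : ‖cZ+d‖ ≥ 1 for all (c,d) ∈ S}`. -/
def F0 (k : ℕ) : Set Pt :=
  {p ∈ HH | ∀ cd ∈ Spairs k, 1 ≤ HNorm (cd.1 : ℝ × ℝ) (cd.2 : ℝ × ℝ) p}

/-- `F_∞ = {(s₁,s₂,r,h) : |s₁| ≤ 1/2, |s₂| ≤ 1/2, ε₀⁻² ≤ r ≤ ε₀²}`, where `ε` stands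
for the fundamental unit `ε₀`. -/
def FInf (k : ℕ) (ε : ℝ) : Set Pt :=
  {p ∈ HH | |s1 k p| ≤ 1 / 2 ∧ |s2 k p| ≤ 1 / 2 ∧ (ε ^ 2)⁻¹ ≤ rr p ∧ rr p ≤ ε ^ 2}

/-- `F = F_∞ ∩ F₀`. -/
def F (k : ℕ) (ε : ℝ) : Set Pt := FInf k ε ∩ F0 k

/-- `SL₂(R)`. -/
abbrev SL (k : ℕ) := Matrix.SpecialLinearGroup (Fin 2) (R k)

/-- Möbius action on the upper half-plane: image of `x + y i` under `(a b; c d)`. -/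
def moeb (a b c d x y : ℝ) : ℝ × ℝ :=
  (((a * x + b) * (c * x + d) + a * c * y ^ 2) / ((c * x + d) ^ 2 + c ^ 2 * y ^ 2),
    y / ((c * x + d) ^ 2 + c ^ 2 * y ^ 2))

/-- The action of `γ ∈ SL₂(R)` on `H²×H²`: `γ` acts on the first factor through the first
embedding and through the conjugate matrix `γ'` (second embedding) on the second factor.
This descends to the Hilbert modular group `PSL₂(R)`. -/
def act (k : ℕ) (g : SL k) (p : Pt) : Pt :=
  ((moeb (g.1 0 0 : ℝ × ℝ).1 (g.1 0 1 : ℝ × ℝ).1 (g.1 1 0 : ℝ × ℝ).1 (g.1 1 1 : ℝ × ℝ).1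
      (x1 p) (y1 p)).1,
   (moeb (g.1 0 0 : ℝ × ℝ).2 (g.1 0 1 : ℝ × ℝ).2 (g.1 1 0 : ℝ × ℝ).2 (g.1 1 1 : ℝ × ℝ).2
      (x2 p) (y2 p)).1,
   (moeb (g.1 0 0 : ℝ × ℝ).1 (g.1 0 1 : ℝ × ℝ).1 (g.1 1 0 : ℝ × ℝ).1 (g.1 1 1 : ℝ × ℝ).1
      (x1 p) (y1 p)).2,
   (moeb (g.1 0 0 : ℝ × ℝ).2 (g.1 0 1 : ℝ × ℝ).2 (g.1 1 0 : ℝ × ℝ).2 (g.1 1 1 : ℝ × ℝ).2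
      (x2 p) (y2 p)).2)

/-- The pair of real embeddings of a unit of `R`. -/
def unitVal (k : ℕ) (u : (R k)ˣ) : ℝ × ℝ := ((u : R k) : ℝ × ℝ)

/-- `e` is the fundamental unit of `R`: the smallest unit of `R` greater than `1`
(with respect to the first embedding). -/
def IsFundUnit (k : ℕ) (e : (R k)ˣ) : Prop :=
  1 < (unitVal k e).1 ∧
    ∀ v : (R k)ˣ, 1 < (unitVal k v).1 → (unitVal k e).1 ≤ (unitVal k v).1

/-- The real number `ε₀ > 1`, the fundamental unit under the first embedding. -/
def eps (k : ℕ) (e : (R k)ˣ) : ℝ := (unitVal k e).1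


/-- The norm `N(c) = c c'` of an element of `R` (as a real number). -/
def Nm (k : ℕ) (c : R k) : ℝ := ((c : ℝ × ℝ)).1 * ((c : ℝ × ℝ)).2

/-- A subset `C` of `H²×H²` is hyperbolically bounded if it is bounded in the
Euclidean metric and `y₁, y₂ > ε` on `C` for some `ε > 0`. -/
def HypBounded (C : Set Pt) : Prop :=
  C ⊆ HH ∧ Bornology.IsBounded C ∧ ∃ ε > (0 : ℝ), ∀ p ∈ C, ε < y1 p ∧ ε < y2 p

/-- `V_{C,μ} = {(c,d) ∈ R × R : ‖cZ+d‖ ≤ μ for some Z ∈ C}`. -/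
def VCmu (k : ℕ) (C : Set Pt) (μ : ℝ) : Set (R k × R k) :=
  {cd | ∃ p ∈ C, HNorm (cd.1 : ℝ × ℝ) (cd.2 : ℝ × ℝ) p ≤ μ}

/-- The conditions (8) of Theorem `FiniteSides` on a pair `(c,d) ∈ R²`. -/
def SCond (k : ℕ) (ε : ℝ) (cd : R k × R k) : Prop :=
  cd.1 ≠ 0 ∧ Ideal.span {cd.1, cd.2} = ⊤ ∧
    |Nm k cd.1| ≤ 2 * k / (k0 k) ^ 2 ∧
    |((cd.2 : ℝ × ℝ)).1 / ((cd.1 : ℝ × ℝ)).1| <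
      ε * Real.sqrt (2 * k / (Nm k cd.1 ^ 2 * (k0 k) ^ 2) - (k0 k) ^ 2 / (2 * k)) +
        (1 + omg k) / 2 ∧
    |((cd.2 : ℝ × ℝ)).2 / ((cd.1 : ℝ × ℝ)).2| <
      ε * Real.sqrt (2 * k / (Nm k cd.1 ^ 2 * (k0 k) ^ 2) - (k0 k) ^ 2 / (2 * k)) +
        (1 - omg' k) / 2

/-- `S₁` is a set of representatives, up to multiplication by units of `R`, of the pairs
`(c,d) ∈ R²` satisfying the conditions `SCond`. -/
def IsRepSet (k : ℕ) (ε : ℝ) (S1 : Set (R k × R k)) : Prop :=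
  (∀ cd ∈ S1, SCond k ε cd) ∧
    (∀ cd : R k × R k, SCond k ε cd →
      ∃ ab ∈ S1, ∃ u : (R k)ˣ, cd.1 = (u : R k) * ab.1 ∧ cd.2 = (u : R k) * ab.2) ∧
    (∀ ab ∈ S1, ∀ ab' ∈ S1,
      (∃ u : (R k)ˣ, ab'.1 = (u : R k) * ab.1 ∧ ab'.2 = (u : R k) * ab.2) → ab = ab')

/-- The family `𝒱_∞ = {V_i^± : i = 1,2,3}`. -/
def VfamInf (k : ℕ) (ε : ℝ) : Set (Set Pt) :=
  { {p ∈ HH | s1 k p = 1 / 2}, {p ∈ HH | s1 k p = -(1 / 2)},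
    {p ∈ HH | s2 k p = 1 / 2}, {p ∈ HH | s2 k p = -(1 / 2)},
    {p ∈ HH | rr p = ε ^ 2}, {p ∈ HH | rr p = (ε ^ 2)⁻¹} }

/-- The family `𝒱 = {V_{c,d} : (c,d) ∈ S, c ≠ 0}`. -/
def Vfam (k : ℕ) : Set (Set Pt) :=
  {V | ∃ cd ∈ Spairs k, cd.1 ≠ 0 ∧ V = Veq k cd}

/-- The family `𝓜 = {γ(M) : γ ∈ Γ, M ∈ 𝒱 ∪ 𝒱_∞}`. -/
def Mfam (k : ℕ) (ε : ℝ) : Set (Set Pt) :=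
  {M | ∃ g : SL k, ∃ V ∈ Vfam k ∪ VfamInf k ε, M = act k g '' V}

/-- `ω` as an element of `R`. -/
def omR (k : ℕ) : R k := ⟨(omg k, omg' k), Subring.subset_closure rfl⟩

/-- The side-pairing transformations: `γ ≠ 1` (in `PSL₂(R)`) such that `F ∩ γ⁻¹(F)` has
Hausdorff dimension `3`. -/
def SidePairings (k : ℕ) (ε : ℝ) : Set (SL k) :=
  {g | g ≠ 1 ∧ g.1 ≠ -1 ∧ dimH (F k ε ∩ act k g⁻¹ '' F k ε) = 3}



end Hilbert

theorem Subring.exists_eq_intCast_add_intCast_mul_of_mem_closure_singleton {A : Type*}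
    [CommRing A] {x : A} {t n : ℤ} (hx : x ^ 2 = t * x - n) {y : A}
    (hy : y ∈ Subring.closure {x}) : ∃ a b : ℤ, y = a + b * x := by
  induction hy using Subring.closure_induction with
  | mem y hy => exact ⟨0, 1, by simp [Set.mem_singleton_iff.mp hy]⟩
  | zero => exact ⟨0, 0, by simp⟩
  | one => exact ⟨1, 0, by simp⟩
  | add y z _ _ hy hz =>
    obtain ⟨a, b, rfl⟩ := hy
    obtain ⟨c, d, rfl⟩ := hz
    exact ⟨a + c, b + d, by push_cast; ring⟩
  | neg y _ hy =>
    obtain ⟨a, b, rfl⟩ := hy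
    exact ⟨-a, -b, by push_cast; ring⟩
  | mul y z _ _ hy hz =>
    obtain ⟨a, b, rfl⟩ := hy
    obtain ⟨c, d, rfl⟩ := hz
    exact ⟨a * c - b * d * n, a * d + b * c + b * d * t, by
      push_cast; linear_combination ((b : A) * d) * hx⟩

theorem Set.exists_finite_forall_exists_of_finite_image {α β : Type*} (f : α → β) {s : Set α}
    (hs : (f '' s).Finite) {r : α → α → Prop}
    (hr : ∀ x ∈ s, ∀ y ∈ s, f x = f y → r x y) :
    ∃ t ⊆ s, t.Finite ∧ ∀ x ∈ s, ∃ y ∈ t, r x y := by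
  obtain ⟨t, hts, hbij⟩ := Set.exists_subset_bijOn s f
  refine ⟨t, hts, Set.Finite.of_finite_image (hbij.image_eq ▸ hs) hbij.injOn, fun x hx => ?_⟩
  obtain ⟨y, hy, hyx⟩ := hbij.surjOn (Set.mem_image_of_mem f hx)
  exact ⟨y, hy, hr x hx y (hts hy) hyx.symm⟩

theorem MulAction.exists_finset_eq_biUnion_orbit {G α : Type*} [Group G] [MulAction G α]
    {S T : Set α} (hT : T.Finite) (hS : ∀ g : G, ∀ x ∈ S, g • x ∈ S)
    (hST : S ⊆ ⋃ t ∈ T, orbit G t) : ∃ T' : Finset α, S = ⋃ t ∈ T', orbit G t := by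
  refine ⟨(hT.inter_of_left S).toFinset, Set.Subset.antisymm (fun x hx => ?_) ?_⟩
  · obtain ⟨t, ht, g, rfl⟩ := Set.mem_iUnion₂.mp (hST hx)
    have htS : t ∈ S := by simpa using hS g⁻¹ _ hx
    exact Set.mem_biUnion (by simpa using And.intro ht htS) ⟨g, rfl⟩
  · simp only [Set.iUnion_subset_iff, Set.Finite.mem_toFinset]
    rintro t ⟨-, htS⟩ _ ⟨g, rfl⟩
    exact hS g t htS

theorem Irrational.intCast_add_intCast_mul_ne_zero {x : ℝ} (hx : Irrational x) {a b : ℤ}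
    (hab : a ≠ 0 ∨ b ≠ 0) : (a : ℝ) + b * x ≠ 0 := by
  rcases eq_or_ne b 0 with rfl | hb
  · simpa using hab
  · exact ((hx.intCast_mul hb).intCast_add a).ne_zero

theorem Int.mem_Icc_of_abs_cast_le {a : ℤ} {B : ℝ} (h : |(a : ℝ)| ≤ B) :
    a ∈ Set.Icc (-⌈B⌉) ⌈B⌉ := by
  have : |a| ≤ ⌈B⌉ := by exact_mod_cast h.trans (Int.le_ceil B)
  exact abs_le.mp this

theorem abs_le_of_sq_add_mul_sq_le {a b d x y ε μ M : ℝ} (hb : b ≠ 0) (hε : 0 < ε)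
    (hy : ε < y) (hx : |x| ≤ M) (h : (a * x + d) ^ 2 * (b * y) ^ 2 ≤ μ) :
    |d| ≤ √μ / (|b| * ε) + |a| * M := by
  have hax : |a * x + d| * (|b| * ε) ≤ √μ :=
    calc |a * x + d| * (|b| * ε) ≤ |a * x + d| * |b * y| := by
          rw [abs_mul, abs_of_pos (hε.trans hy)]; gcongr
      _ ≤ √μ := by rw [← abs_mul]; exact Real.abs_le_sqrt (by rwa [mul_pow])
  calc |d| = |(a * x + d) - a * x| := by ring_nf
    _ ≤ |a * x + d| + |a * x| := abs_sub _ _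
    _ ≤ √μ / (|b| * ε) + |a| * M := by
      rw [abs_mul]
      gcongr
      rwa [le_div_iff₀ (by positivity)]

namespace Hilbert

variable {k : ℕ}

theorem k0_pos (k : ℕ) : 0 < k0 k := by
  unfold k0; split_ifs <;> norm_num

theorem omg'_lt_omg (hk : 0 < k) : omg' k < omg k := by
  unfold omg omg'
  have : 0 < √(k : ℝ) := Real.sqrt_pos.mpr (by exact_mod_cast hk)
  gcongr
  · exact k0_pos k
  · linarith

theorem exists_int_omg_add_omg'_and_omg_mul_omg' (k : ℕ) :
    ∃ t n : ℤ, omg k + omg' k = t ∧ omg k * omg' k = n := by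
  have hs : √(k : ℝ) * √(k : ℝ) = k := Real.mul_self_sqrt (Nat.cast_nonneg k)
  unfold omg omg' k0
  split_ifs with h
  · obtain ⟨q, hq⟩ : (4 : ℤ) ∣ 1 - k := by omega
    have hq' : (1 : ℝ) - k = 4 * q := by exact_mod_cast hq
    exact ⟨1, q, by push_cast; ring, by linear_combination (-hs + hq') / 4⟩
  · exact ⟨2, 1 - k, by push_cast; ring, by push_cast; linear_combination -hs⟩

@[simp] theorem coe_omR (k : ℕ) : ((omR k : R k) : ℝ × ℝ) = (omg k, omg' k) := rfl

theorem coe_intCast_add_intCast_mul_omR (a b : ℤ) :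
    ((a + b * omR k : R k) : ℝ × ℝ) = (a + b * omg k, a + b * omg' k) := by
  ext <;> simp

theorem exists_eq_intCast_add_intCast_mul_omR (c : R k) : ∃ a b : ℤ, c = a + b * omR k := by
  obtain ⟨t, n, ht, hn⟩ := exists_int_omg_add_omg'_and_omg_mul_omg' k
  have hx : ((omg k, omg' k) : ℝ × ℝ) ^ 2 = t * (omg k, omg' k) - n := by
    ext
    · simp; linear_combination omg k * ht - hn
    · simp; linear_combination omg' k * ht - hn
  obtain ⟨a, b, h⟩ := Subring.exists_eq_intCast_add_intCast_mul_of_mem_closure_singleton hx c.2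
  exact ⟨a, b, Subtype.ext (by simpa using h)⟩

theorem exists_int_Nm_eq (c : R k) : ∃ n : ℤ, Nm k c = n := by
  obtain ⟨a, b, rfl⟩ := exists_eq_intCast_add_intCast_mul_omR c
  obtain ⟨t, n, ht, hn⟩ := exists_int_omg_add_omg'_and_omg_mul_omg' k
  refine ⟨a ^ 2 + a * b * t + b ^ 2 * n, ?_⟩
  rw [Nm, coe_intCast_add_intCast_mul_omR]
  push_cast
  linear_combination (a : ℝ) * b * ht + (b : ℝ) ^ 2 * hn

theorem irrational_omg (hk : Squarefree k) (hk1 : 1 < k) : Irrational (omg k) := by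
  have hsqrt : Irrational (1 + √(k : ℝ)) := by
    suffices ¬IsSquare k by simpa using (irrational_sqrt_natCast_iff.mpr this).natCast_add 1
    rintro ⟨m, rfl⟩
    have := Nat.isUnit_iff.mp (hk m ⟨1, by ring⟩)
    subst this
    omega
  unfold omg k0
  split_ifs
  · simpa using hsqrt.div_natCast (m := 2) two_ne_zero
  · simpa using hsqrt

theorem fst_ne_zero_and_snd_ne_zero (hk : Squarefree k) (hk1 : 1 < k) {c : R k} (hc : c ≠ 0) :
    (c : ℝ × ℝ).1 ≠ 0 ∧ (c : ℝ × ℝ).2 ≠ 0 := by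
  obtain ⟨a, b, rfl⟩ := exists_eq_intCast_add_intCast_mul_omR c
  obtain ⟨t, -, ht, -⟩ := exists_int_omg_add_omg'_and_omg_mul_omg' k
  have hab : a ≠ 0 ∨ b ≠ 0 := by
    by_contra! h
    exact hc (by simp [h.1, h.2])
  have hω := irrational_omg hk hk1
  have hω' : Irrational (omg' k) := by
    simpa [← ht] using hω.intCast_sub t
  rw [coe_intCast_add_intCast_mul_omR]
  exact ⟨hω.intCast_add_intCast_mul_ne_zero hab, hω'.intCast_add_intCast_mul_ne_zero hab⟩

theorem Nm_ne_zero (hk : Squarefree k) (hk1 : 1 < k) {c : R k} (hc : c ≠ 0) : Nm k c ≠ 0 :=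
  mul_ne_zero (fst_ne_zero_and_snd_ne_zero hk hk1 hc).1
    (fst_ne_zero_and_snd_ne_zero hk hk1 hc).2

theorem eq_of_mul_eq_mul_left (hk : Squarefree k) (hk1 : 1 < k) {c x y : R k} (hc : c ≠ 0)
    (h : c * x = c * y) : x = y := by
  obtain ⟨h1, h2⟩ := fst_ne_zero_and_snd_ne_zero hk hk1 hc
  have h' := congrArg (fun z : R k => (z : ℝ × ℝ)) h
  simp only [MulMemClass.coe_mul, Prod.ext_iff, Prod.fst_mul, Prod.snd_mul] at h'
  exact Subtype.ext (Prod.ext (mul_left_cancel₀ h1 h'.1) (mul_left_cancel₀ h2 h'.2))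

theorem Nm_mul (c d : R k) : Nm k (c * d) = Nm k c * Nm k d := by
  simp only [Nm, MulMemClass.coe_mul, Prod.fst_mul, Prod.snd_mul]
  ring

theorem sq_Nm_units (u : (R k)ˣ) : Nm k u ^ 2 = 1 := by
  obtain ⟨m, hm⟩ := exists_int_Nm_eq (u : R k)
  obtain ⟨m', hm'⟩ := exists_int_Nm_eq ((u⁻¹ : (R k)ˣ) : R k)
  have hmm' : m * m' = 1 := by
    have : Nm k (u * ↑u⁻¹ : R k) = 1 := by simp [Nm]
    rw [Nm_mul, hm, hm'] at this
    exact_mod_cast this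
  rcases Int.eq_one_or_neg_one_of_mul_eq_one' hmm' with ⟨rfl, -⟩ | ⟨rfl, -⟩ <;> simp [hm]

theorem swap_mem_R (c : R k) : Prod.swap (c : ℝ × ℝ) ∈ R k := by
  obtain ⟨a, b, rfl⟩ := exists_eq_intCast_add_intCast_mul_omR c
  obtain ⟨t, -, ht, -⟩ := exists_int_omg_add_omg'_and_omg_mul_omg' k
  have : Prod.swap ((a + b * omR k : R k) : ℝ × ℝ) =
      (((a + b * t : ℤ) + (-b : ℤ) * omR k : R k) : ℝ × ℝ) := by
    rw [coe_intCast_add_intCast_mul_omR, coe_intCast_add_intCast_mul_omR]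
    ext <;> simp only [Prod.fst_swap, Prod.snd_swap] <;> push_cast <;>
      linear_combination (b : ℝ) * ht
  exact this ▸ Subtype.prop _

def conj (c : R k) : R k := ⟨Prod.swap (c : ℝ × ℝ), swap_mem_R c⟩

theorem mul_conj_eq_intCast (c : R k) {n : ℤ} (hn : Nm k c = n) : c * conj c = n := by
  apply Subtype.ext
  ext <;> simp [conj, ← hn, Nm, mul_comm]

theorem exists_units_eq_mul_of_sub_eq_mul (hk : Squarefree k) (hk1 : 1 < k) {c c' r : R k}
    {n : ℤ} (hc : c ≠ 0) (hn : Nm k c = n) (hn' : Nm k c' = n) (h : c - c' = n * r) :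
    ∃ u : (R k)ˣ, c = u * c' := by
  -- `n = c' * conj c'`, so `c / c' = 1 + conj c' * r` lies in `R`, and symmetrically for `c' / c`
  have hx : c = c' * (1 + conj c' * r) := by linear_combination h - r * mul_conj_eq_intCast c' hn'
  have hy : c' = c * (1 - conj c * r) := by linear_combination -h + r * mul_conj_eq_intCast c hn
  have hyx : (1 - conj c * r) * (1 + conj c' * r) = 1 :=
    eq_of_mul_eq_mul_left hk hk1 hc (by linear_combination (-(1 + conj c' * r)) * hy - hx)
  exact ⟨⟨_, _, (mul_comm _ _).trans hyx, hyx⟩, hx.trans (mul_comm _ _)⟩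

theorem exists_finite_forall_exists_units_eq_mul (hk : Squarefree k) (hk1 : 1 < k) (B : ℝ) :
    ∃ T ⊆ {c : R k | c ≠ 0}, T.Finite ∧
      ∀ c : R k, c ≠ 0 → |Nm k c| ≤ B →
        ∃ c₀ ∈ T, ∃ u : (R k)ˣ, c = u * c₀ := by
  choose a b hab using exists_eq_intCast_add_intCast_mul_omR (k := k)
  choose N hN using exists_int_Nm_eq (k := k)
  set S := {c : R k | c ≠ 0 ∧ |Nm k c| ≤ B}
  -- the norm `n` of `c` and the coordinates of `c` modulo `n`
  set ι : R k → ℤ × ℤ × ℤ := fun c => (N c, a c % N c, b c % N c)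
  have hfinite : (ι '' S).Finite := by
    refine ((Set.finite_Icc (-⌈B⌉) ⌈B⌉).prod
      ((Set.finite_Icc 0 ⌈B⌉).prod (Set.finite_Icc 0 ⌈B⌉))).subset ?_
    rintro _ ⟨c, ⟨hc, hcB⟩, rfl⟩
    have hNc : N c ≠ 0 := by exact_mod_cast hN c ▸ Nm_ne_zero hk hk1 hc
    have hNB := Int.mem_Icc_of_abs_cast_le (hN c ▸ hcB)
    have hNB' : ((N c).natAbs : ℤ) ≤ ⌈B⌉ := by rw [Int.natCast_natAbs]; exact abs_le.mpr hNB
    exact ⟨hNB, ⟨Int.emod_nonneg _ hNc, (Int.emod_lt _ hNc).le.trans hNB'⟩,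
      ⟨Int.emod_nonneg _ hNc, (Int.emod_lt _ hNc).le.trans hNB'⟩⟩
  have hassoc : ∀ c ∈ S, ∀ c' ∈ S, ι c = ι c' → ∃ u : (R k)ˣ, c = u * c' := by
    rintro c ⟨hc, -⟩ c' - h
    simp only [ι, Prod.mk.injEq] at h
    obtain ⟨hNN, ha, hb⟩ := h
    rw [← hNN] at ha hb
    obtain ⟨p, hp⟩ := Int.ModEq.dvd (Int.ModEq.symm ha)
    obtain ⟨q, hq⟩ := Int.ModEq.dvd (Int.ModEq.symm hb)
    have hp' : (a c : R k) - a c' = N c * p := mod_cast congrArg (Int.cast : ℤ → R k) hp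
    have hq' : (b c : R k) - b c' = N c * q := mod_cast congrArg (Int.cast : ℤ → R k) hq
    exact exists_units_eq_mul_of_sub_eq_mul hk hk1 hc (hN c) (hNN ▸ hN c')
      (r := p + q * omR k) (by linear_combination hab c - hab c' + hp' + omR k * hq')
  obtain ⟨T, hTS, hT, hcover⟩ :=
    Set.exists_finite_forall_exists_of_finite_image ι hfinite hassoc
  exact ⟨T, fun c hc => (hTS hc).1, hT, fun c hc hcB => hcover c ⟨hc, hcB⟩⟩

theorem finite_setOf_abs_fst_le_and_abs_snd_le (hk : 0 < k) (M₁ M₂ : ℝ) :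
    {c : R k | |(c : ℝ × ℝ).1| ≤ M₁ ∧ |(c : ℝ × ℝ).2| ≤ M₂}.Finite := by
  have hδ : 0 < omg k - omg' k := sub_pos.mpr (omg'_lt_omg hk)
  set Bb := (M₁ + M₂) / (omg k - omg' k)
  set Ba := M₁ + Bb * |omg k|
  refine (((Set.finite_Icc (-⌈Ba⌉) ⌈Ba⌉).prod (Set.finite_Icc (-⌈Bb⌉) ⌈Bb⌉)).image
    fun ab : ℤ × ℤ => (ab.1 + ab.2 * omR k : R k)).subset ?_
  rintro c ⟨h₁, h₂⟩
  obtain ⟨a, b, rfl⟩ := exists_eq_intCast_add_intCast_mul_omR c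
  simp only [coe_intCast_add_intCast_mul_omR] at h₁ h₂
  have hb : |(b : ℝ)| ≤ Bb := by
    rw [le_div_iff₀ hδ]
    calc |(b : ℝ)| * (omg k - omg' k)
        = |(a + b * omg k) - (a + b * omg' k)| := by rw [← abs_of_pos hδ, ← abs_mul]; ring_nf
      _ ≤ M₁ + M₂ := (abs_sub _ _).trans (add_le_add h₁ h₂)
  have ha : |(a : ℝ)| ≤ Ba :=
    calc |(a : ℝ)| = |(a + b * omg k) - b * omg k| := by ring_nf
      _ ≤ |a + b * omg k| + |b * omg k| := abs_sub _ _
      _ ≤ M₁ + Bb * |omg k| := by rw [abs_mul]; gcongr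
  exact ⟨(a, b), ⟨Int.mem_Icc_of_abs_cast_le ha, Int.mem_Icc_of_abs_cast_le hb⟩, rfl⟩

theorem HNorm_mul_mul (u c d : ℝ × ℝ) (p : Pt) :
    HNorm (u * c) (u * d) p = (u.1 * u.2) ^ 2 * HNorm c d p := by
  simp only [HNorm, Prod.fst_mul, Prod.snd_mul]
  ring

theorem HNorm_zero_left (d : ℝ × ℝ) (p : Pt) : HNorm 0 d p = (d.1 * d.2) ^ 2 := by
  simp only [HNorm, Prod.fst_zero, Prod.snd_zero]
  ring

theorem sq_mul_hh_le_HNorm (c d : ℝ × ℝ) (p : Pt) : (c.1 * c.2 * hh p) ^ 2 ≤ HNorm c d p :=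
  calc (c.1 * c.2 * hh p) ^ 2 = (c.1 ^ 2 * y1 p ^ 2) * (c.2 ^ 2 * y2 p ^ 2) := by rw [hh]; ring
    _ ≤ HNorm c d p := by
      unfold HNorm
      gcongr <;> exact le_add_of_nonneg_left (sq_nonneg _)

theorem sq_fst_mul_sq_le_HNorm (c d : ℝ × ℝ) (p : Pt) :
    (c.1 * x1 p + d.1) ^ 2 * (c.2 * y2 p) ^ 2 ≤ HNorm c d p := by
  unfold HNorm
  rw [mul_pow c.2]
  gcongr <;> simp only [le_add_iff_nonneg_right, le_add_iff_nonneg_left] <;> positivity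

theorem sq_snd_mul_sq_le_HNorm (c d : ℝ × ℝ) (p : Pt) :
    (c.2 * x2 p + d.2) ^ 2 * (c.1 * y1 p) ^ 2 ≤ HNorm c d p := by
  unfold HNorm
  rw [mul_pow c.1, mul_comm]
  gcongr <;> simp only [le_add_iff_nonneg_right, le_add_iff_nonneg_left] <;> positivity

section VCmu

variable {C : Set Pt} {μ ε M : ℝ}

theorem smul_mem_VCmu (u : (R k)ˣ) {cd : R k × R k} (h : cd ∈ VCmu k C μ) :
    u • cd ∈ VCmu k C μ := by
  obtain ⟨p, hp, hle⟩ := h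
  refine ⟨p, hp, ?_⟩
  have := HNorm_mul_mul (u : R k) cd.1 cd.2 p
  simp only [Prod.smul_fst, Prod.smul_snd, Units.smul_def, smul_eq_mul, MulMemClass.coe_mul]
  rwa [this, ← Nm, sq_Nm_units, one_mul]

theorem abs_Nm_le_of_mem_VCmu (hε : 0 < ε) (hy : ∀ p ∈ C, ε < y1 p ∧ ε < y2 p)
    {cd : R k × R k} (h : cd ∈ VCmu k C μ) : |Nm k cd.1| ≤ √μ / ε ^ 2 := by
  obtain ⟨p, hp, hle⟩ := h
  have hεh : ε ^ 2 ≤ hh p := by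
    rw [sq, hh]; gcongr <;> linarith [hy p hp]
  rw [le_div_iff₀ (by positivity)]
  calc |Nm k cd.1| * ε ^ 2 ≤ |Nm k cd.1| * hh p := by gcongr
    _ = |Nm k cd.1 * hh p| := by
      rw [abs_mul, abs_of_pos ((by positivity : 0 < ε ^ 2).trans_le hεh)]
    _ ≤ √μ := Real.abs_le_sqrt ((sq_mul_hh_le_HNorm _ _ p).trans hle)

theorem abs_Nm_le_of_zero_mem_VCmu {d : R k} (h : ((0 : R k), d) ∈ VCmu k C μ) :
    |Nm k d| ≤ √μ := by
  obtain ⟨p, -, hle⟩ := h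
  exact Real.abs_le_sqrt (by rwa [ZeroMemClass.coe_zero, HNorm_zero_left] at hle)

theorem finite_setOf_mem_VCmu (hk : Squarefree k) (hk1 : 1 < k) (hε : 0 < ε)
    (hy : ∀ p ∈ C, ε < y1 p ∧ ε < y2 p) (hx : ∀ p ∈ C, |x1 p| ≤ M ∧ |x2 p| ≤ M)
    {c : R k} (hc : c ≠ 0) : {d : R k | (c, d) ∈ VCmu k C μ}.Finite := by
  obtain ⟨hc₁, hc₂⟩ := fst_ne_zero_and_snd_ne_zero hk hk1 hc
  refine (finite_setOf_abs_fst_le_and_abs_snd_le (k := k) (by omega)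
    (√μ / (|(c : ℝ × ℝ).2| * ε) + |(c : ℝ × ℝ).1| * M)
    (√μ / (|(c : ℝ × ℝ).1| * ε) + |(c : ℝ × ℝ).2| * M)).subset ?_
  rintro d ⟨p, hp, hle⟩
  exact ⟨abs_le_of_sq_add_mul_sq_le hc₂ hε (hy p hp).2 (hx p hp).1
      ((sq_fst_mul_sq_le_HNorm _ _ p).trans hle),
    abs_le_of_sq_add_mul_sq_le hc₁ hε (hy p hp).1 (hx p hp).2
      ((sq_snd_mul_sq_le_HNorm _ _ p).trans hle)⟩

theorem exists_finite_VCmu_subset_biUnion_orbit (hk : Squarefree k) (hk1 : 1 < k)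
    (hε : 0 < ε) (hy : ∀ p ∈ C, ε < y1 p ∧ ε < y2 p)
    (hx : ∀ p ∈ C, |x1 p| ≤ M ∧ |x2 p| ≤ M) :
    ∃ T : Set (R k × R k), T.Finite ∧
      VCmu k C μ ⊆ ⋃ t ∈ T, MulAction.orbit (R k)ˣ t := by
  obtain ⟨Tc, hTc0, hTc, hcoverc⟩ :=
    exists_finite_forall_exists_units_eq_mul hk hk1 (√μ / ε ^ 2)
  obtain ⟨Td, -, hTd, hcoverd⟩ := exists_finite_forall_exists_units_eq_mul hk hk1 √μ
  refine ⟨{0} ∪ Prod.mk 0 '' Td ∪ ⋃ c ∈ Tc, Prod.mk c '' {d | (c, d) ∈ VCmu k C μ},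
    ((Set.finite_singleton 0).union (hTd.image _)).union
      (hTc.biUnion fun c hc => (finite_setOf_mem_VCmu hk hk1 hε hy hx (hTc0 hc)).image _), ?_⟩
  rintro ⟨c, d⟩ hcd
  rcases eq_or_ne c 0 with rfl | hc
  · rcases eq_or_ne d 0 with rfl | hd
    · exact Set.mem_biUnion (x := 0) (by simp) (MulAction.mem_orbit_self _)
    · obtain ⟨d₀, hd₀, u, rfl⟩ := hcoverd d hd (abs_Nm_le_of_zero_mem_VCmu hcd)
      exact Set.mem_biUnion (x := (0, d₀)) (by simp [hd₀]) ⟨u, by simp [Units.smul_def]⟩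
  · obtain ⟨c₀, hc₀, u, rfl⟩ := hcoverc c hc (abs_Nm_le_of_mem_VCmu hε hy hcd)
    have hmem : (c₀, ↑u⁻¹ * d) ∈ VCmu k C μ := by
      simpa [Units.smul_def] using smul_mem_VCmu u⁻¹ hcd
    exact Set.mem_biUnion (Or.inr (Set.mem_biUnion hc₀ ⟨_, hmem, rfl⟩))
      ⟨u, by simp [Units.smul_def]⟩

end VCmu

theorem VCmu_finite_up_to_units_general (k : ℕ) (hk : Squarefree k) (hk1 : 1 < k)
    (C : Set Pt) (hC : HypBounded C) (μ : ℝ) :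
    ∃ T : Finset (R k × R k),
      VCmu k C μ =
        {cd | ∃ i ∈ T, ∃ u : (R k)ˣ,
          cd.1 = (u : R k) * i.1 ∧ cd.2 = (u : R k) * i.2} := by
  obtain ⟨-, hCb, ε, hε, hy⟩ := hC
  obtain ⟨M, hM⟩ := isBounded_iff_forall_norm_le.mp hCb
  have hx : ∀ p ∈ C, |x1 p| ≤ M ∧ |x2 p| ≤ M := fun p hp =>
    ⟨(norm_fst_le p).trans (hM p hp), ((norm_fst_le p.2).trans (norm_snd_le p)).trans (hM p hp)⟩
  obtain ⟨T, hT, hcover⟩ := exists_finite_VCmu_subset_biUnion_orbit hk hk1 hε hy hx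
  obtain ⟨T', hT'⟩ :=
    MulAction.exists_finset_eq_biUnion_orbit hT (fun u _ => smul_mem_VCmu u) hcover
  refine ⟨T', hT'.trans ?_⟩
  ext cd
  simp [MulAction.mem_orbit_iff, Prod.ext_iff, Units.smul_def, eq_comm]

/-- If `C` is a hyperbolically bounded subset of `H²×H²` and `μ > 0`, then
there are finitely many elements `(c₁,d₁), …, (c_k,d_k)` of `R × R` such that
`V_{C,μ} = {(u cᵢ, u dᵢ) : 1 ≤ i ≤ k, u a unit of R}`. -/
theorem VCmu_finite_up_to_units (k : ℕ) (hk : Squarefree k) (hk1 : 1 < k)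
    (C : Set Pt) (hC : HypBounded C) (μ : ℝ) (hμ : 0 < μ) :
    ∃ T : Finset (R k × R k),
      VCmu k C μ =
        {cd | ∃ i ∈ T, ∃ u : (R k)ˣ,
          cd.1 = (u : R k) * i.1 ∧ cd.2 = (u : R k) * i.2} :=
  VCmu_finite_up_to_units_general k hk hk1 C hC μ

end Hilbert
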